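/- Let (R,μ) be a Hopf-Galois algebra over a field k and let (τ,ω,g,h,c,ξ) satisfy the conditions of Theorem mainmain. Then there exist convolution-commuting characters α, β : H̲(R) → k such that for all r ∈ R: τ(r) = α(r_(2)⊗r_(3)) g·r_(1) and ω(r) = β(r_(2)⊗r_(3)) h·r_(1); and for all u ∈ H̲(R): α(u_(1)) u_(2) = (g^{-1}⊗g)·u_(1) α(u_(2)) and β(u_(1)) u_(2) = (h^{-1}⊗h)·u_(1) β(u_(2)). -/
import Mathlib


open TensorProduct MulOpposite

set_option synthInstance.maxHeartbeats 1000000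
set_option maxHeartbeats 1000000

noncomputable section

universe u v w

section Maps

variable (k : Type u) [Field k] (R : Type v) [Ring R] [Algebra k R]

/-- `unop` as a `k`-linear map. -/
def unopL : Rᵐᵒᵖ →ₗ[k] R :=
  ((opLinearEquiv k : R ≃ₗ[k] Rᵐᵒᵖ)).symm.toLinearMap

/-- `op` as a `k`-linear map. -/
def opL : R →ₗ[k] Rᵐᵒᵖ :=
  (opLinearEquiv k : R ≃ₗ[k] Rᵐᵒᵖ).toLinearMap

/-- `Rᵐᵒᵖ ⊗ R → R`, `op x ⊗ y ↦ x * y`. -/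
def opMulL : Rᵐᵒᵖ ⊗[k] R →ₗ[k] R :=
  LinearMap.mul' k R ∘ₗ LinearMap.rTensor R (unopL k R)

/-- `R ⊗ Rᵐᵒᵖ → R`, `x ⊗ op y ↦ x * y`. -/
def mulOpL : R ⊗[k] Rᵐᵒᵖ →ₗ[k] R :=
  LinearMap.mul' k R ∘ₗ LinearMap.lTensor R (unopL k R)

/-- Conjugation `r ↦ g r g⁻¹` as a `k`-linear map. -/
def conjL (g : Rˣ) : R →ₗ[k] R :=
  LinearMap.mulLeft k (g : R) ∘ₗ LinearMap.mulRight k ((g⁻¹ : Rˣ) : R)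

/-- Conjugation on the opposite algebra. -/
def conjOpL (g : Rˣ) : Rᵐᵒᵖ →ₗ[k] Rᵐᵒᵖ :=
  opL k R ∘ₗ conjL k R g ∘ₗ unopL k R

end Maps

/-- A linear map `R →ₗ A` induces `Rᵐᵒᵖ →ₗ Aᵐᵒᵖ`. -/
def opMapL (k : Type u) [Field k] {R : Type v} {A : Type w} [Ring R] [Algebra k R]
    [Ring A] [Algebra k A] (f : R →ₗ[k] A) : Rᵐᵒᵖ →ₗ[k] Aᵐᵒᵖ :=
  opL k A ∘ₗ f ∘ₗ unopL k R

variable (k : Type u) [Field k]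

/-- A Hopf-Galois algebra structure (quantum torsor) on an algebra `R`:
an algebra map `μ : R → R ⊗ Rᵒᵖ ⊗ R` which is coassociative and satisfies the
two counit-type axioms `(m ⊗ id) ∘ μ = η ⊗ id` and `(id ⊗ m) ∘ μ = id ⊗ η`. -/
structure HopfGaloisStr (R : Type v) [Ring R] [Algebra k R] where
  μ : R →ₐ[k] R ⊗[k] (Rᵐᵒᵖ ⊗[k] R)
  coassoc :
    LinearMap.lTensor R (LinearMap.lTensor Rᵐᵒᵖ μ.toLinearMap) ∘ₗ μ.toLinearMap
      = LinearMap.lTensor R (TensorProduct.assoc k Rᵐᵒᵖ R (Rᵐᵒᵖ ⊗[k] R)).toLinearMap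
        ∘ₗ (TensorProduct.assoc k R (Rᵐᵒᵖ ⊗[k] R) (Rᵐᵒᵖ ⊗[k] R)).toLinearMap
        ∘ₗ LinearMap.rTensor (Rᵐᵒᵖ ⊗[k] R) μ.toLinearMap ∘ₗ μ.toLinearMap
  mul12 : ∀ r : R,
    LinearMap.rTensor R (mulOpL k R) ((TensorProduct.assoc k R Rᵐᵒᵖ R).symm (μ r))
      = (1 : R) ⊗ₜ[k] r
  mul23 : ∀ r : R,
    LinearMap.lTensor R (opMulL k R) (μ r) = r ⊗ₜ[k] (1 : R)

namespace HopfGaloisStr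

variable {k} {R : Type v} [Ring R] [Algebra k R]

/-- A group-like element of a Hopf-Galois algebra: an invertible `g` with
`μ(g) = g ⊗ g⁻¹ ⊗ g`. -/
def IsGroupLike (H : HopfGaloisStr k R) (g : Rˣ) : Prop :=
  H.μ (g : R) = (g : R) ⊗ₜ[k] ((op ((g⁻¹ : Rˣ) : R)) ⊗ₜ[k] (g : R))

/-- A `(g,h)`-skew primitive element of a Hopf-Galois algebra:
`μ(x) = x ⊗ h⁻¹ ⊗ h − g ⊗ g⁻¹xh⁻¹ ⊗ h + g ⊗ g⁻¹ ⊗ x`. -/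
def IsSkewPrimitive (H : HopfGaloisStr k R) (g h : Rˣ) (x : R) : Prop :=
  H.μ x = x ⊗ₜ[k] ((op ((h⁻¹ : Rˣ) : R)) ⊗ₜ[k] ((h : Rˣ) : R))
    - (g : R) ⊗ₜ[k] ((op (((g⁻¹ : Rˣ) : R) * x * ((h⁻¹ : Rˣ) : R))) ⊗ₜ[k] (h : R))
    + (g : R) ⊗ₜ[k] ((op ((g⁻¹ : Rˣ) : R)) ⊗ₜ[k] x)

/-- A quasi-central group-like element: there is a character `α` on the
group-likes such that `x g = α(x) g x` for every group-like `x`. -/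
def IsQuasiCentral (H : HopfGaloisStr k R) (g : Rˣ) : Prop :=
  H.IsGroupLike g ∧ ∃ α : Rˣ → kˣ,
    (∀ x y : Rˣ, H.IsGroupLike x → H.IsGroupLike y → α (x * y) = α x * α y) ∧
    ∀ x : Rˣ, H.IsGroupLike x → (x : R) * (g : R) = ((α x : k)) • ((g : R) * (x : R))

end HopfGaloisStr

section HR

variable {k} {R : Type v} [Ring R] [Algebra k R]

/-- The comultiplication-type map on `Rᵐᵒᵖ ⊗ R`:
`x ⊗ y ↦ (x ⊗ y_(1)) ⊗ (y_(2) ⊗ y_(3))`. -/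
def deltaMap (H : HopfGaloisStr k R) :
    Rᵐᵒᵖ ⊗[k] R →ₗ[k] (Rᵐᵒᵖ ⊗[k] R) ⊗[k] (Rᵐᵒᵖ ⊗[k] R) :=
  (TensorProduct.assoc k Rᵐᵒᵖ R (Rᵐᵒᵖ ⊗[k] R)).symm.toLinearMap
    ∘ₗ LinearMap.lTensor Rᵐᵒᵖ H.μ.toLinearMap

/-- The map `x ⊗ y ↦ x y_(1) ⊗ (y_(2) ⊗ y_(3))`. -/
def PhiMap (H : HopfGaloisStr k R) :
    Rᵐᵒᵖ ⊗[k] R →ₗ[k] R ⊗[k] (Rᵐᵒᵖ ⊗[k] R) :=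
  LinearMap.rTensor (Rᵐᵒᵖ ⊗[k] R) (opMulL k R) ∘ₗ deltaMap H

/-- The underlying subspace of the Hopf algebra `H̲(R)` associated to a
Hopf-Galois algebra `R`: the set of `x ⊗ y ∈ Rᵒᵖ ⊗ R` such that
`x y_(1) ⊗ y_(2) ⊗ y_(3) = 1 ⊗ x ⊗ y`. -/
def HRsub (H : HopfGaloisStr k R) : Submodule k (Rᵐᵒᵖ ⊗[k] R) :=
  LinearMap.eqLocus (PhiMap H) ((TensorProduct.mk k R (Rᵐᵒᵖ ⊗[k] R)) 1)

/-- Group-like elements of `H̲(R)`: elements `u ∈ H̲(R)` with `Δ(u) = u ⊗ u`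
and `ε(u) = 1`. -/
def IsGroupLikeHR (H : HopfGaloisStr k R) (u : Rᵐᵒᵖ ⊗[k] R) : Prop :=
  u ∈ HRsub H ∧ deltaMap H u = u ⊗ₜ[k] u ∧ opMulL k R u = 1

/-- `(u₀,u₁)`-skew primitive elements of `H̲(R)`:
elements `x ∈ H̲(R)` with `Δ(x) = x ⊗ u₁ + u₀ ⊗ x`. -/
def IsSkewPrimitiveHR (H : HopfGaloisStr k R) (u₀ u₁ x : Rᵐᵒᵖ ⊗[k] R) : Prop :=
  x ∈ HRsub H ∧ deltaMap H x = x ⊗ₜ[k] u₁ + u₀ ⊗ₜ[k] x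

end HR

/-- A (not necessarily commutative or cocommutative) Hopf algebra structure
on an algebra `H`, spelled out in terms of linear-map identities. -/
structure HopfAlgStr (H : Type w) [Ring H] [Algebra k H] where
  comul : H →ₐ[k] H ⊗[k] H
  counit : H →ₐ[k] k
  coassoc : ∀ x : H,
    (TensorProduct.assoc k H H H) (LinearMap.rTensor H comul.toLinearMap (comul x))
      = LinearMap.lTensor H comul.toLinearMap (comul x)
  counit_id : ∀ x : H,
    (TensorProduct.lid k H) (LinearMap.rTensor H counit.toLinearMap (comul x)) = x
  id_counit : ∀ x : H,
    (TensorProduct.rid k H) (LinearMap.lTensor H counit.toLinearMap (comul x)) = x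
  antipode : H →ₗ[k] H
  antipode_left : ∀ x : H,
    LinearMap.mul' k H (LinearMap.rTensor H antipode (comul x))
      = algebraMap k H (counit x)
  antipode_right : ∀ x : H,
    LinearMap.mul' k H (LinearMap.lTensor H antipode (comul x))
      = algebraMap k H (counit x)

namespace HopfAlgStr

variable {k} {H : Type w} [Ring H] [Algebra k H]

/-- Group-like element of a Hopf algebra. -/
def IsGroupLikeElem (s : HopfAlgStr k H) (g : H) : Prop :=
  s.comul g = g ⊗ₜ[k] g ∧ s.counit g = 1

/-- `(g,h)`-skew primitive element of a Hopf algebra: `Δ(x) = x ⊗ h + g ⊗ x`. -/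
def IsSkewPrim (s : HopfAlgStr k H) (g h x : H) : Prop :=
  s.comul x = x ⊗ₜ[k] h + g ⊗ₜ[k] x

/-- Convolution product of two linear functionals. -/
def conv (s : HopfAlgStr k H) (α β : H →ₗ[k] k) : H →ₗ[k] k :=
  LinearMap.mul' k k ∘ₗ TensorProduct.map α β ∘ₗ s.comul.toLinearMap

/-- The map `r ↦ α(r_(1)) r_(2)`. -/
def sweedL (s : HopfAlgStr k H) (α : H →ₗ[k] k) : H →ₗ[k] H :=
  (TensorProduct.lid k H).toLinearMap ∘ₗ TensorProduct.map α LinearMap.id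
    ∘ₗ s.comul.toLinearMap

/-- The map `r ↦ (g r_(1) g⁻¹) α(r_(2))`. -/
def sweedConj (s : HopfAlgStr k H) (g : Hˣ) (α : H →ₗ[k] k) : H →ₗ[k] H :=
  (TensorProduct.rid k H).toLinearMap ∘ₗ TensorProduct.map (conjL k H g) α
    ∘ₗ s.comul.toLinearMap

end HopfAlgStr

section Galois

variable {k} {R : Type v} [Ring R] [Algebra k R] {H : Type w} [Ring H] [Algebra k H]

/-- The Galois map `R ⊗ R → R ⊗ H`, `r ⊗ s ↦ r s_(0) ⊗ s_(1)`, for a coaction `ρ`. -/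
def canMap (ρ : R →ₐ[k] R ⊗[k] H) : R ⊗[k] R →ₗ[k] R ⊗[k] H :=
  LinearMap.rTensor H (LinearMap.mul' k R)
    ∘ₗ (TensorProduct.assoc k R R H).symm.toLinearMap
    ∘ₗ LinearMap.lTensor R ρ.toLinearMap

/-- `R` is a right Hopf-Galois object over the Hopf algebra `(H, s)` via the
coaction `ρ`: `ρ` is a comodule-algebra structure with trivial coinvariants and
bijective Galois map. -/
structure IsHopfGaloisObject (s : HopfAlgStr k H) (ρ : R →ₐ[k] R ⊗[k] H) : Prop where
  coassoc : ∀ r : R,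
    (TensorProduct.assoc k R H H) (LinearMap.rTensor H ρ.toLinearMap (ρ r))
      = LinearMap.lTensor R s.comul.toLinearMap (ρ r)
  counit : ∀ r : R,
    (TensorProduct.rid k R) (LinearMap.lTensor R s.counit.toLinearMap (ρ r)) = r
  coinvariants : ∀ r : R, ρ r = r ⊗ₜ[k] (1 : H) → ∃ a : k, r = a • (1 : R)
  galois : Function.Bijective (canMap ρ)

end Galois

/-- A presentation of the generalized ambiskew polynomial algebra
`A(R, X, Y, τ, ω, c, ξ)`: an algebra `A` containing `R` (via `i`) and elements
`X, Y` subject to `X r = τ(r) X`, `Y r = ω(r) Y`, `XY − ξ YX = c`, which is a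
free left `R`-module with basis `{Xᵃ Yᵇ}`. -/
structure IsAmbiskew {R : Type v} [Ring R] [Algebra k R]
    (τ ω : R ≃ₐ[k] R) (c : R) (ξ : kˣ)
    {A : Type w} [Ring A] [Algebra k A] (i : R →ₐ[k] A) (X Y : A) : Prop where
  commX : ∀ r : R, X * i r = i (τ r) * X
  commY : ∀ r : R, Y * i r = i (ω r) * Y
  bracket : X * Y - (ξ : k) • (Y * X) = i c
  free : Function.Bijective (fun f : (ℕ × ℕ) →₀ R =>
    f.sum fun p r => i r * X ^ p.1 * Y ^ p.2)

end

noncomputable section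

variable {k : Type u} [Field k]

/-- The conditions of Theorem mainmain on a sextuple `(τ, ω, g, h, c, ξ)`
attached to a Hopf-Galois algebra `(R, μ)`. -/
structure MainMainHyp {R : Type v} [Ring R] [Algebra k R]
    (H : HopfGaloisStr k R) (τ ω : R ≃ₐ[k] R) (g h : Rˣ) (c : R) (ξ : kˣ) :
    Prop where
  /-- `τ` and `ω` commute. -/
  comm : ∀ r : R, τ (ω r) = ω (τ r)
  /-- `τ(r)_(1) ⊗ τ(r)_(2) ⊗ τ(r)_(3) = τ(r_(1)) ⊗ r_(2) ⊗ r_(3)`. -/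
  idτ1 : ∀ r : R,
    H.μ (τ r) = LinearMap.rTensor (Rᵐᵒᵖ ⊗[k] R) τ.toLinearMap (H.μ r)
  /-- `τ(r)_(1) ⊗ τ(r)_(2) ⊗ τ(r)_(3) = τ(r_(1)) ⊗ τ(r_(2)) ⊗ τ(r_(3))`. -/
  idτ2 : ∀ r : R,
    H.μ (τ r) = TensorProduct.map τ.toLinearMap
      (TensorProduct.map (opMapL k τ.toLinearMap) τ.toLinearMap) (H.μ r)
  /-- `ω(r)_(1) ⊗ ω(r)_(2) ⊗ ω(r)_(3) = ω(r_(1)) ⊗ r_(2) ⊗ r_(3)`. -/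
  idω1 : ∀ r : R,
    H.μ (ω r) = LinearMap.rTensor (Rᵐᵒᵖ ⊗[k] R) ω.toLinearMap (H.μ r)
  /-- `ω(r)_(1) ⊗ ω(r)_(2) ⊗ ω(r)_(3) = ω(r_(1)) ⊗ ω(r_(2)) ⊗ ω(r_(3))`. -/
  idω2 : ∀ r : R,
    H.μ (ω r) = TensorProduct.map ω.toLinearMap
      (TensorProduct.map (opMapL k ω.toLinearMap) ω.toLinearMap) (H.μ r)
  /-- `g` is a quasi-central group-like element. -/
  qcg : H.IsQuasiCentral g
  /-- `h` is a quasi-central group-like element. -/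
  qch : H.IsQuasiCentral h
  /-- `g·r_(1) ⊗ g·r_(2) ⊗ r_(3) = τ(r_(1)) ⊗ τ(r_(2)) ⊗ r_(3)`. -/
  idg : ∀ r : R,
    TensorProduct.map (conjL k R g) (LinearMap.rTensor R (conjOpL k R g)) (H.μ r)
      = TensorProduct.map τ.toLinearMap
          (LinearMap.rTensor R (opMapL k τ.toLinearMap)) (H.μ r)
  /-- `h·r_(1) ⊗ h·r_(2) ⊗ r_(3) = ω(r_(1)) ⊗ ω(r_(2)) ⊗ r_(3)`. -/
  idh : ∀ r : R,
    TensorProduct.map (conjL k R h) (LinearMap.rTensor R (conjOpL k R h)) (H.μ r)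
      = TensorProduct.map ω.toLinearMap
          (LinearMap.rTensor R (opMapL k ω.toLinearMap)) (H.μ r)
  /-- `τ(h) = ξ h`. -/
  ξh : τ ((h : Rˣ) : R) = (ξ : k) • ((h : Rˣ) : R)
  /-- `ω(g) = ξ⁻¹ g`. -/
  ξg : ω ((g : Rˣ) : R) = ((ξ⁻¹ : kˣ) : k) • ((g : Rˣ) : R)
  /-- `c` is `σ`-central for `σ = τω`. -/
  sc : ∀ r : R, c * r = τ (ω r) * c
  /-- `c` is `(gh, 1)`-skew primitive. -/
  prim : H.IsSkewPrimitive (g * h) 1 c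

/-- The Hopf-Galois structure `HA` on `A` extends `(R, μ)` along `i`. -/
def ExtendsHG {R : Type v} [Ring R] [Algebra k R] {A : Type w} [Ring A]
    [Algebra k A] (H : HopfGaloisStr k R) (HA : HopfGaloisStr k A)
    (i : R →ₐ[k] A) : Prop :=
  ∀ r : R, HA.μ (i r) = TensorProduct.map i.toLinearMap
    (TensorProduct.map (opMapL k i.toLinearMap) i.toLinearMap) (H.μ r)

/-- The formula `μ(X) = X⊗1⊗1 − g ⊗ g⁻¹X ⊗ 1 + g ⊗ g⁻¹ ⊗ X`. -/
def MuFormula {R : Type v} [Ring R] [Algebra k R] {A : Type w} [Ring A]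
    [Algebra k A] (HA : HopfGaloisStr k A) (i : R →ₐ[k] A) (g : Rˣ) (X : A) :
    Prop :=
  HA.μ X = X ⊗ₜ[k] ((MulOpposite.op (1 : A)) ⊗ₜ[k] (1 : A))
    - i ((g : Rˣ) : R) ⊗ₜ[k]
        ((MulOpposite.op (i (((g⁻¹ : Rˣ)) : R) * X)) ⊗ₜ[k] (1 : A))
    + i ((g : Rˣ) : R) ⊗ₜ[k]
        ((MulOpposite.op (i (((g⁻¹ : Rˣ)) : R))) ⊗ₜ[k] X)

/-- The map `Rᵒᵖ ⊗ R → Aᵒᵖ ⊗ A` induced by `i : R → A`. -/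
def incl2 {R : Type v} [Ring R] [Algebra k R] {A : Type w} [Ring A]
    [Algebra k A] (i : R →ₐ[k] A) : Rᵐᵒᵖ ⊗[k] R →ₗ[k] Aᵐᵒᵖ ⊗[k] A :=
  TensorProduct.map (opMapL k i.toLinearMap) i.toLinearMap

/-- The map `r ⊗ s ↦ (g·r) ⊗ τ(s)` on `Rᵒᵖ ⊗ R` (conjugation on the first leg). -/
def hrAuto {R : Type v} [Ring R] [Algebra k R] (g : Rˣ) (τ : R ≃ₐ[k] R) :
    Rᵐᵒᵖ ⊗[k] R →ₗ[k] Rᵐᵒᵖ ⊗[k] R :=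
  TensorProduct.map (conjOpL k R g) τ.toLinearMap

/-- The element `φ(g) = g⁻¹ ⊗ g` of `Rᵒᵖ ⊗ R`. -/
def phiEl {R : Type v} [Ring R] [Algebra k R] (g : Rˣ) : Rᵐᵒᵖ ⊗[k] R :=
  (MulOpposite.op (((g⁻¹ : Rˣ)) : R)) ⊗ₜ[k] ((g : Rˣ) : R)

end
noncomputable section S16

open TensorProduct MulOpposite LinearMap

variable {k : Type u} [Field k] {R : Type v} [Ring R] [Algebra k R]

@[simp] lemma unopL_apply (x : Rᵐᵒᵖ) : unopL k R x = unop x := rfl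
@[simp] lemma opL_apply (x : R) : opL k R x = op x := rfl

@[simp] lemma opMulL_tmul (x : Rᵐᵒᵖ) (y : R) :
    opMulL k R (x ⊗ₜ[k] y) = unop x * y := by
  simp [opMulL]

@[simp] lemma conjL_apply (g : Rˣ) (r : R) :
    conjL k R g r = (g : R) * r * ((g⁻¹ : Rˣ) : R) := by
  simp [conjL, mul_assoc]

@[simp] lemma conjOpL_apply (g : Rˣ) (x : Rᵐᵒᵖ) :
    conjOpL k R g x = op ((g : R) * unop x * ((g⁻¹ : Rˣ) : R)) := by
  simp [conjOpL, mul_assoc]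

lemma conjL_conjL (g : Rˣ) : conjL k R g⁻¹ ∘ₗ conjL k R g = LinearMap.id := by
  ext r
  simp [mul_assoc]

lemma conjOpL_conjOpL (g : Rˣ) :
    conjOpL k R g⁻¹ ∘ₗ conjOpL k R g = LinearMap.id := by
  ext r
  simp [mul_assoc]

lemma mapmap {A B C D E F : Type*} [AddCommMonoid A] [Module k A]
    [AddCommMonoid B] [Module k B] [AddCommMonoid C] [Module k C]
    [AddCommMonoid D] [Module k D] [AddCommMonoid E] [Module k E]
    [AddCommMonoid F] [Module k F]
    (f1 : A →ₗ[k] B) (f2 : B →ₗ[k] C) (g1 : D →ₗ[k] E) (g2 : E →ₗ[k] F)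
    (t : A ⊗[k] D) :
    TensorProduct.map f2 g2 (TensorProduct.map f1 g1 t)
      = TensorProduct.map (f2 ∘ₗ f1) (g2 ∘ₗ g1) t := by
  rw [← LinearMap.comp_apply, ← TensorProduct.map_comp]

lemma map_assoc_symm_tmul {A B : Type*} [AddCommMonoid A] [Module k A]
    [AddCommMonoid B] [Module k B]
    (F : Rᵐᵒᵖ ⊗[k] R →ₗ[k] A) (G : Rᵐᵒᵖ ⊗[k] R →ₗ[k] B)
    (x : Rᵐᵒᵖ) (t : R ⊗[k] (Rᵐᵒᵖ ⊗[k] R)) :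
    TensorProduct.map F G
        ((TensorProduct.assoc k Rᵐᵒᵖ R (Rᵐᵒᵖ ⊗[k] R)).symm (x ⊗ₜ[k] t))
      = TensorProduct.map (F ∘ₗ TensorProduct.mk k Rᵐᵒᵖ R x) G t := by
  induction t using TensorProduct.induction_on with
  | zero => simp
  | tmul y u => simp [TensorProduct.assoc_symm_tmul]
  | add s t hs ht => simp [tmul_add, hs, ht]

lemma deltaMap_tmul (H : HopfGaloisStr k R) (x : Rᵐᵒᵖ) (y : R) :
    deltaMap H (x ⊗ₜ[k] y)
      = (TensorProduct.assoc k Rᵐᵒᵖ R (Rᵐᵒᵖ ⊗[k] R)).symm (x ⊗ₜ[k] H.μ y) := by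
  simp [deltaMap]

lemma opMulL_mk (x : Rᵐᵒᵖ) :
    opMulL k R ∘ₗ TensorProduct.mk k Rᵐᵒᵖ R x = LinearMap.mulLeft k (unop x) := by
  ext y; simp

lemma PhiMap_tmul (H : HopfGaloisStr k R) (x : Rᵐᵒᵖ) (y : R) :
    PhiMap H (x ⊗ₜ[k] y)
      = LinearMap.rTensor (Rᵐᵒᵖ ⊗[k] R) (LinearMap.mulLeft k (unop x)) (H.μ y) := by
  show TensorProduct.map (opMulL k R) LinearMap.id (deltaMap H (x ⊗ₜ[k] y)) = _
  rw [deltaMap_tmul, map_assoc_symm_tmul, opMulL_mk]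
  rfl

end S16
noncomputable section S16b

open TensorProduct MulOpposite LinearMap

variable {k : Type u} [Field k] {R : Type v} [Ring R] [Algebra k R]

/-- The map `x ⊗ y ↦ (g x g⁻¹) τ(y)`. -/
def Bm (τ : R ≃ₐ[k] R) (g : Rˣ) : Rᵐᵒᵖ ⊗[k] R →ₗ[k] R :=
  opMulL k R ∘ₗ hrAuto g τ

@[simp] lemma Bm_tmul (τ : R ≃ₐ[k] R) (g : Rˣ) (x : Rᵐᵒᵖ) (y : R) :
    Bm τ g (x ⊗ₜ[k] y) = (g : R) * unop x * ((g⁻¹ : Rˣ) : R) * τ y := by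
  simp [Bm, hrAuto, mul_assoc]

lemma Bm_mk (τ : R ≃ₐ[k] R) (g : Rˣ) (x : Rᵐᵒᵖ) :
    Bm τ g ∘ₗ TensorProduct.mk k Rᵐᵒᵖ R x
      = LinearMap.mulLeft k ((g : R) * unop x * ((g⁻¹ : Rˣ) : R)) ∘ₗ τ.toLinearMap := by
  ext y; simp [mul_assoc]

section pair

variable (H : HopfGaloisStr k R) (τ : R ≃ₐ[k] R) (g : Rˣ)
variable (h1 : ∀ r, H.μ (τ r) = LinearMap.rTensor (Rᵐᵒᵖ ⊗[k] R) τ.toLinearMap (H.μ r))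
variable (h2 : ∀ r, H.μ (τ r) = TensorProduct.map τ.toLinearMap
      (TensorProduct.map (opMapL k τ.toLinearMap) τ.toLinearMap) (H.μ r))
variable (hgid : ∀ r,
    TensorProduct.map (conjL k R g) (LinearMap.rTensor R (conjOpL k R g)) (H.μ r)
      = TensorProduct.map τ.toLinearMap (LinearMap.rTensor R (opMapL k τ.toLinearMap)) (H.μ r))

include h2 hgid in
lemma L1 : ∀ r, TensorProduct.map (conjL k R g) (hrAuto g τ) (H.μ r) = H.μ (τ r) := by
  intro r
  have e1 : TensorProduct.map (conjL k R g) (hrAuto g τ) (H.μ r)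
      = TensorProduct.map LinearMap.id (LinearMap.lTensor Rᵐᵒᵖ τ.toLinearMap)
          (TensorProduct.map (conjL k R g) (LinearMap.rTensor R (conjOpL k R g)) (H.μ r)) := by
    rw [mapmap, LinearMap.id_comp, LinearMap.lTensor_comp_rTensor]
    rfl
  rw [e1, hgid r, mapmap, LinearMap.id_comp, LinearMap.lTensor_comp_rTensor]
  exact (h2 r).symm

include h2 hgid in
lemma L2 : ∀ r, LinearMap.lTensor R (hrAuto g τ) (H.μ r)
    = LinearMap.rTensor (Rᵐᵒᵖ ⊗[k] R) (conjL k R g⁻¹) (H.μ (τ r)) := by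
  intro r
  rw [← L1 H τ g h2 hgid r]
  show _ = TensorProduct.map (conjL k R g⁻¹) LinearMap.id _
  rw [mapmap, conjL_conjL, LinearMap.id_comp]
  rfl

include h2 hgid in
lemma L3 : ∀ y, LinearMap.lTensor R (Bm τ g) (H.μ y)
    = (((g⁻¹ : Rˣ) : R) * τ y * (g : R)) ⊗ₜ[k] (1 : R) := by
  intro y
  have : LinearMap.lTensor R (Bm τ g) (H.μ y)
      = LinearMap.lTensor R (opMulL k R) (LinearMap.lTensor R (hrAuto g τ) (H.μ y)) := by
    rw [← LinearMap.comp_apply, ← LinearMap.lTensor_comp]; rfl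
  rw [this, L2 H τ g h2 hgid y]
  have comm : LinearMap.lTensor R (opMulL k R)
      (LinearMap.rTensor (Rᵐᵒᵖ ⊗[k] R) (conjL k R g⁻¹) (H.μ (τ y)))
      = LinearMap.rTensor R (conjL k R g⁻¹)
          (LinearMap.lTensor R (opMulL k R) (H.μ (τ y))) := by
    rw [← LinearMap.comp_apply, ← LinearMap.comp_apply,
        LinearMap.lTensor_comp_rTensor, LinearMap.rTensor_comp_lTensor]
  rw [comm, H.mul23 (τ y)]
  simp [mul_assoc]

include h2 hgid in
lemma L4 : ∀ r, TensorProduct.map (conjL k R g) (Bm τ g) (H.μ r)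
    = τ r ⊗ₜ[k] (1 : R) := by
  intro r
  have : TensorProduct.map (conjL k R g) (Bm τ g) (H.μ r)
      = TensorProduct.map LinearMap.id (opMulL k R)
          (TensorProduct.map (conjL k R g) (hrAuto g τ) (H.μ r)) := by
    rw [mapmap, LinearMap.id_comp]; rfl
  rw [this, L1 H τ g h2 hgid r]
  exact H.mul23 (τ r)

include h2 hgid in
lemma L5 : ∀ z, LinearMap.lTensor R (Bm τ g) (PhiMap H z)
    = (conjL k R g⁻¹ (Bm τ g z)) ⊗ₜ[k] (1 : R) := by
  intro z
  induction z using TensorProduct.induction_on with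
  | zero => simp
  | tmul x y =>
    rw [PhiMap_tmul]
    have comm : LinearMap.lTensor R (Bm τ g)
        (LinearMap.rTensor (Rᵐᵒᵖ ⊗[k] R) (LinearMap.mulLeft k (unop x)) (H.μ y))
        = LinearMap.rTensor R (LinearMap.mulLeft k (unop x))
            (LinearMap.lTensor R (Bm τ g) (H.μ y)) := by
      rw [← LinearMap.comp_apply, ← LinearMap.comp_apply,
          LinearMap.lTensor_comp_rTensor, LinearMap.rTensor_comp_lTensor]
    rw [comm, L3 H τ g h2 hgid y]
    simp [mul_assoc]
  | add s t hs ht => simp [hs, ht, add_tmul, mul_add, add_mul]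

end pair

end S16b
noncomputable section S16c

open TensorProduct MulOpposite LinearMap

variable {k : Type u} [Field k] {R : Type v} [Ring R] [Algebra k R]

lemma exists_lam [Nontrivial R] : ∃ lam : R →ₗ[k] k, lam 1 = 1 := by
  have hinj : LinearMap.ker (LinearMap.toSpanSingleton k R 1) = ⊥ := by
    rw [LinearMap.ker_eq_bot]
    intro c d hcd
    by_contra hne
    have h0 : (c - d) • (1 : R) = 0 := by
      rw [sub_smul]
      simp only [LinearMap.toSpanSingleton_apply] at hcd
      rw [hcd, sub_self]
    have h1 : (1 : R) = 0 := by
      calc (1 : R) = (c - d)⁻¹ • ((c - d) • (1 : R)) := by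
            rw [smul_smul, inv_mul_cancel₀ (sub_ne_zero.mpr hne), one_smul]
        _ = 0 := by rw [h0, smul_zero]
    exact one_ne_zero h1
  obtain ⟨lam, hlam⟩ := LinearMap.exists_leftInverse_of_injective _ hinj
  refine ⟨lam, ?_⟩
  have := DFunLike.congr_fun hlam 1
  simpa using this

lemma conjL_mulLeft (g : Rˣ) (u : R) :
    conjL k R g ∘ₗ LinearMap.mulLeft k u
      = LinearMap.mulLeft k ((g : R) * u * ((g⁻¹ : Rˣ) : R)) ∘ₗ conjL k R g := by
  ext r; simp [mul_assoc]

lemma opMulL_conj2 (h : Rˣ) :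
    opMulL k R ∘ₗ TensorProduct.map (conjOpL k R h⁻¹) (conjL k R h⁻¹)
      = conjL k R h⁻¹ ∘ₗ opMulL k R := by
  apply TensorProduct.ext'
  intro x y
  simp [mul_assoc]

lemma conj2_eq (g : Rˣ) :
    (LinearMap.mulLeft k (phiEl g) ∘ₗ
        LinearMap.mulRight k ((op ((g : Rˣ) : R)) ⊗ₜ[k] (((g⁻¹ : Rˣ)) : R))
      : Rᵐᵒᵖ ⊗[k] R →ₗ[k] Rᵐᵒᵖ ⊗[k] R)
      = TensorProduct.map (conjOpL k R g) (conjL k R g) := by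
  apply TensorProduct.ext'
  intro x y
  simp only [LinearMap.comp_apply, LinearMap.mulRight_apply, LinearMap.mulLeft_apply,
    phiEl, Algebra.TensorProduct.tmul_mul_tmul, TensorProduct.map_tmul, conjOpL_apply,
    conjL_apply]
  congr 1
  rw [mul_assoc]

section pair2

variable (H : HopfGaloisStr k R) (τ : R ≃ₐ[k] R) (g : Rˣ)
variable (h1 : ∀ r, H.μ (τ r) = LinearMap.rTensor (Rᵐᵒᵖ ⊗[k] R) τ.toLinearMap (H.μ r))
variable (h2 : ∀ r, H.μ (τ r) = TensorProduct.map τ.toLinearMap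
      (TensorProduct.map (opMapL k τ.toLinearMap) τ.toLinearMap) (H.μ r))
variable (hgid : ∀ r,
    TensorProduct.map (conjL k R g) (LinearMap.rTensor R (conjOpL k R g)) (H.μ r)
      = TensorProduct.map τ.toLinearMap (LinearMap.rTensor R (opMapL k τ.toLinearMap)) (H.μ r))

include h2 hgid in
lemma L6 (lam : R →ₗ[k] k) (hlam : lam 1 = 1) {z : Rᵐᵒᵖ ⊗[k] R} (hz : z ∈ HRsub H) :
    Bm τ g z = algebraMap k R (lam (Bm τ g z)) := by
  have hz' : PhiMap H z = (1 : R) ⊗ₜ[k] z := hz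
  have key : (1 : R) ⊗ₜ[k] (Bm τ g z) = (conjL k R g⁻¹ (Bm τ g z)) ⊗ₜ[k] (1 : R) := by
    have h5 := L5 H τ g h2 hgid z
    rw [hz'] at h5
    simpa using h5
  have e : Bm τ g z = lam (conjL k R g⁻¹ (Bm τ g z)) • (1 : R) := by
    have := congrArg (fun t => (TensorProduct.lid k R) (TensorProduct.map lam LinearMap.id t)) key
    simpa [hlam] using this
  have e2 : lam (Bm τ g z) = lam (conjL k R g⁻¹ (Bm τ g z)) := by
    have := congrArg lam e
    simpa [hlam] using this
  rw [Algebra.algebraMap_eq_smul_one, e2]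
  exact e

lemma L7a (x' : Rᵐᵒᵖ) (y' : R) :
    ∀ z, Bm τ g (z * (x' ⊗ₜ[k] y'))
      = ((g : R) * unop x' * ((g⁻¹ : Rˣ) : R)) * Bm τ g z * τ y' := by
  intro z
  induction z using TensorProduct.induction_on with
  | zero => simp
  | tmul x y =>
    rw [Algebra.TensorProduct.tmul_mul_tmul]
    simp [unop_mul, map_mul, mul_assoc, Units.inv_mul_cancel_left]
  | add s t hs ht => simp [add_mul, mul_add, hs, ht]

include h2 hgid in
lemma L7 (lam : R →ₗ[k] k) (hlam : lam 1 = 1) {z} (hz : z ∈ HRsub H) :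
    ∀ w, lam (Bm τ g (z * w)) = lam (Bm τ g z) * lam (Bm τ g w) := by
  have hBz := L6 H τ g h2 hgid lam hlam hz
  intro w
  induction w using TensorProduct.induction_on with
  | zero => simp
  | tmul x' y' =>
    rw [L7a, hBz, Algebra.algebraMap_eq_smul_one]
    simp [mul_smul_comm, smul_mul_assoc, mul_assoc, hlam]
  | add s t hs ht => simp [mul_add, hs, ht]

include h2 hgid in
lemma L8 (lam : R →ₗ[k] k) (hlam : lam 1 = 1) : ∀ r,
    τ r = TensorProduct.rid k R
      (TensorProduct.map (conjL k R g) (lam ∘ₗ Bm τ g) (H.μ r)) := by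
  intro r
  have e : TensorProduct.map (conjL k R g) (lam ∘ₗ Bm τ g) (H.μ r)
      = TensorProduct.map LinearMap.id lam
          (TensorProduct.map (conjL k R g) (Bm τ g) (H.μ r)) := by
    rw [mapmap, LinearMap.id_comp]
  rw [e, L4 H τ g h2 hgid r]
  simp [hlam]

include h1 h2 hgid in
lemma L9 : ∀ z, TensorProduct.map (Bm τ g) LinearMap.id (deltaMap H z)
    = TensorProduct.map (conjL k R g) (hrAuto g τ) (PhiMap H z) := by
  intro z
  induction z using TensorProduct.induction_on with
  | zero => simp
  | tmul x y =>
    rw [deltaMap_tmul, map_assoc_symm_tmul, PhiMap_tmul, Bm_mk]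
    have l : TensorProduct.map
        (LinearMap.mulLeft k ((g : R) * unop x * ((g⁻¹ : Rˣ) : R)) ∘ₗ τ.toLinearMap)
        LinearMap.id (H.μ y)
        = LinearMap.rTensor (Rᵐᵒᵖ ⊗[k] R)
            (LinearMap.mulLeft k ((g : R) * unop x * ((g⁻¹ : Rˣ) : R))) (H.μ (τ y)) := by
      rw [h1 y]
      show _ = TensorProduct.map (LinearMap.mulLeft k ((g : R) * unop x * ((g⁻¹ : Rˣ) : R)))
        LinearMap.id (TensorProduct.map τ.toLinearMap LinearMap.id (H.μ y))
      rw [mapmap, LinearMap.id_comp]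
    rw [l]
    have r1 : TensorProduct.map (conjL k R g) (hrAuto g τ)
        (LinearMap.rTensor (Rᵐᵒᵖ ⊗[k] R) (LinearMap.mulLeft k (unop x)) (H.μ y))
        = LinearMap.rTensor (Rᵐᵒᵖ ⊗[k] R)
            (LinearMap.mulLeft k ((g : R) * unop x * ((g⁻¹ : Rˣ) : R)))
            (TensorProduct.map (conjL k R g) (hrAuto g τ) (H.μ y)) := by
      show TensorProduct.map (conjL k R g) (hrAuto g τ)
          (TensorProduct.map (LinearMap.mulLeft k (unop x)) LinearMap.id (H.μ y))
        = TensorProduct.map (LinearMap.mulLeft k ((g : R) * unop x * ((g⁻¹ : Rˣ) : R)))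
            LinearMap.id (TensorProduct.map (conjL k R g) (hrAuto g τ) (H.μ y))
      rw [mapmap, mapmap, LinearMap.comp_id, LinearMap.id_comp, conjL_mulLeft]
    rw [r1, L1 H τ g h2 hgid y]
  | add s t hs ht => simp [hs, ht]

include h2 hgid in
lemma L10 : ∀ z, TensorProduct.map
      (TensorProduct.map (conjOpL k R g) (conjL k R g)) (Bm τ g) (deltaMap H z)
    = hrAuto g τ z ⊗ₜ[k] (1 : R) := by
  intro z
  induction z using TensorProduct.induction_on with
  | zero => simp
  | tmul x y =>
    rw [deltaMap_tmul, map_assoc_symm_tmul]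
    have e0 : TensorProduct.map (conjOpL k R g) (conjL k R g) ∘ₗ TensorProduct.mk k Rᵐᵒᵖ R x
        = TensorProduct.mk k Rᵐᵒᵖ R (conjOpL k R g x) ∘ₗ conjL k R g := by
      ext y1; rfl
    rw [e0]
    have e1 : TensorProduct.map
        (TensorProduct.mk k Rᵐᵒᵖ R (conjOpL k R g x) ∘ₗ conjL k R g) (Bm τ g) (H.μ y)
        = TensorProduct.map (TensorProduct.mk k Rᵐᵒᵖ R (conjOpL k R g x)) LinearMap.id
            (TensorProduct.map (conjL k R g) (Bm τ g) (H.μ y)) := by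
      rw [mapmap, LinearMap.id_comp]
    rw [e1, L4 H τ g h2 hgid y]
    simp [hrAuto]
  | add s t hs ht => simp [hs, ht, add_tmul]

end pair2

end S16c
noncomputable section S16d

open TensorProduct MulOpposite LinearMap

variable {k : Type u} [Field k] {R : Type v} [Ring R] [Algebra k R]

lemma lT_rT {M N P Q : Type*} [AddCommMonoid M] [Module k M] [AddCommMonoid N]
    [Module k N] [AddCommMonoid P] [Module k P] [AddCommMonoid Q] [Module k Q]
    (f : M →ₗ[k] N) (g : P →ₗ[k] Q) (t : M ⊗[k] P) :
    LinearMap.lTensor N g (LinearMap.rTensor P f t)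
      = LinearMap.rTensor Q f (LinearMap.lTensor M g t) := by
  rw [← LinearMap.comp_apply, ← LinearMap.comp_apply,
    LinearMap.lTensor_comp_rTensor, LinearMap.rTensor_comp_lTensor]

/-- The map `x ⊗ y ↦ (g x g⁻¹) (h⁻¹ ω(τ(y)) h)`. -/
def Pm (τ ω : R ≃ₐ[k] R) (g h : Rˣ) : Rᵐᵒᵖ ⊗[k] R →ₗ[k] R :=
  opMulL k R ∘ₗ TensorProduct.map (conjOpL k R g)
    (conjL k R h⁻¹ ∘ₗ ω.toLinearMap ∘ₗ τ.toLinearMap)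

@[simp] lemma Pm_tmul (τ ω : R ≃ₐ[k] R) (g h : Rˣ) (x : Rᵐᵒᵖ) (y : R) :
    Pm τ ω g h (x ⊗ₜ[k] y)
      = ((g : R) * unop x * ((g⁻¹ : Rˣ) : R))
          * (((h⁻¹ : Rˣ) : R) * ω (τ y) * (h : R)) := by
  simp [Pm, mul_assoc]

/-- The map `x ⊗ y ↦ x ⬝ s(y)`. -/
def Qm (s : R →ₗ[k] R) : Rᵐᵒᵖ ⊗[k] R →ₗ[k] R :=
  opMulL k R ∘ₗ LinearMap.lTensor Rᵐᵒᵖ s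

@[simp] lemma Qm_tmul (s : R →ₗ[k] R) (x : Rᵐᵒᵖ) (y : R) :
    Qm s (x ⊗ₜ[k] y) = unop x * s y := by
  simp [Qm]

section mixed

variable (H : HopfGaloisStr k R) (τ ω : R ≃ₐ[k] R) (g h : Rˣ)
variable (h1τ : ∀ r, H.μ (τ r) = LinearMap.rTensor (Rᵐᵒᵖ ⊗[k] R) τ.toLinearMap (H.μ r))
variable (h2τ : ∀ r, H.μ (τ r) = TensorProduct.map τ.toLinearMap
      (TensorProduct.map (opMapL k τ.toLinearMap) τ.toLinearMap) (H.μ r))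
variable (hgid : ∀ r,
    TensorProduct.map (conjL k R g) (LinearMap.rTensor R (conjOpL k R g)) (H.μ r)
      = TensorProduct.map τ.toLinearMap (LinearMap.rTensor R (opMapL k τ.toLinearMap)) (H.μ r))
variable (h2ω : ∀ r, H.μ (ω r) = TensorProduct.map ω.toLinearMap
      (TensorProduct.map (opMapL k ω.toLinearMap) ω.toLinearMap) (H.μ r))
variable (hhid : ∀ r,
    TensorProduct.map (conjL k R h) (LinearMap.rTensor R (conjOpL k R h)) (H.μ r)
      = TensorProduct.map ω.toLinearMap (LinearMap.rTensor R (opMapL k ω.toLinearMap)) (H.μ r))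

include h1τ h2ω hhid in
lemma L11 : ∀ z, TensorProduct.map (Bm τ g) (Bm ω h) (deltaMap H z)
    = Pm τ ω g h z ⊗ₜ[k] (1 : R) := by
  intro z
  induction z using TensorProduct.induction_on with
  | zero => simp
  | tmul x y =>
    rw [deltaMap_tmul, map_assoc_symm_tmul, Bm_mk]
    have e1 : TensorProduct.map
        (LinearMap.mulLeft k ((g : R) * unop x * ((g⁻¹ : Rˣ) : R)) ∘ₗ τ.toLinearMap)
        (Bm ω h) (H.μ y)
        = TensorProduct.map (LinearMap.mulLeft k ((g : R) * unop x * ((g⁻¹ : Rˣ) : R)))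
            LinearMap.id
            (TensorProduct.map LinearMap.id (Bm ω h)
              (TensorProduct.map τ.toLinearMap LinearMap.id (H.μ y))) := by
      rw [mapmap, mapmap, LinearMap.comp_id, LinearMap.comp_id, LinearMap.id_comp]
    rw [e1]
    have e2 : TensorProduct.map τ.toLinearMap LinearMap.id (H.μ y) = H.μ (τ y) :=
      (h1τ y).symm
    rw [e2]
    have e3 : TensorProduct.map LinearMap.id (Bm ω h) (H.μ (τ y))
        = (((h⁻¹ : Rˣ) : R) * ω (τ y) * (h : R)) ⊗ₜ[k] (1 : R) :=
      L3 H ω h h2ω hhid (τ y)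
    rw [e3]
    simp [mul_assoc]
  | add s t hs ht => simp [hs, ht, add_tmul]

include h2τ hgid h2ω hhid in
lemma L12 : ∀ y, LinearMap.lTensor R (Pm τ ω g h) (H.μ y)
    = (((g⁻¹ : Rˣ) : R) * (((h⁻¹ : Rˣ) : R) * ω (τ y) * (h : R)) * (g : R))
        ⊗ₜ[k] (1 : R) := by
  intro y
  have decomp : TensorProduct.map (conjOpL k R g)
      (conjL k R h⁻¹ ∘ₗ ω.toLinearMap ∘ₗ τ.toLinearMap)
      = TensorProduct.map (conjOpL k R h⁻¹) (conjL k R h⁻¹)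
          ∘ₗ hrAuto h ω ∘ₗ hrAuto g τ := by
    rw [show hrAuto h ω = TensorProduct.map (conjOpL k R h) ω.toLinearMap from rfl,
        show hrAuto g τ = TensorProduct.map (conjOpL k R g) τ.toLinearMap from rfl,
        ← TensorProduct.map_comp, ← TensorProduct.map_comp,
        ← LinearMap.comp_assoc (conjOpL k R g) (conjOpL k R h) (conjOpL k R h⁻¹),
        conjOpL_conjOpL, LinearMap.id_comp]
  have ePm : Pm τ ω g h = opMulL k R
      ∘ₗ (TensorProduct.map (conjOpL k R h⁻¹) (conjL k R h⁻¹)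
          ∘ₗ (hrAuto h ω ∘ₗ hrAuto g τ)) := by
    rw [Pm, decomp]
  have step : LinearMap.lTensor R (Pm τ ω g h) (H.μ y)
      = LinearMap.lTensor R (opMulL k R)
          (LinearMap.lTensor R (TensorProduct.map (conjOpL k R h⁻¹) (conjL k R h⁻¹))
            (LinearMap.lTensor R (hrAuto h ω)
              (LinearMap.lTensor R (hrAuto g τ) (H.μ y)))) := by
    rw [ePm]
    simp only [LinearMap.lTensor_comp, LinearMap.comp_apply]
  rw [step, L2 H τ g h2τ hgid y, lT_rT, L2 H ω h h2ω hhid (τ y)]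
  have inner : LinearMap.lTensor R (opMulL k R)
      (LinearMap.lTensor R (TensorProduct.map (conjOpL k R h⁻¹) (conjL k R h⁻¹))
        (H.μ (ω (τ y))))
      = (ω (τ y)) ⊗ₜ[k] (1 : R) := by
    rw [← LinearMap.comp_apply, ← LinearMap.lTensor_comp, opMulL_conj2,
        LinearMap.lTensor_comp, LinearMap.comp_apply, H.mul23 (ω (τ y))]
    simp [mul_assoc]
  rw [lT_rT, lT_rT, lT_rT, lT_rT, inner]
  simp [mul_assoc]

include h2τ hgid h2ω hhid in
lemma LQ : ∀ z, LinearMap.lTensor R (Pm τ ω g h) (PhiMap H z)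
    = Qm (conjL k R g⁻¹ ∘ₗ conjL k R h⁻¹ ∘ₗ ω.toLinearMap ∘ₗ τ.toLinearMap) z
        ⊗ₜ[k] (1 : R) := by
  intro z
  induction z using TensorProduct.induction_on with
  | zero => simp
  | tmul x y =>
    rw [PhiMap_tmul, lT_rT, L12 H τ ω g h h2τ hgid h2ω hhid y]
    simp [mul_assoc]
  | add s t hs ht => simp [hs, ht, add_tmul]

end mixed

lemma qc_swap (H : HopfGaloisStr k R) {g h : Rˣ} (hq : H.IsQuasiCentral h)
    (hgl : H.IsGroupLike g) (s : R) :
    ((g⁻¹ : Rˣ) : R) * ((((h⁻¹ : Rˣ) : R)) * s * (h : R)) * (g : R)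
      = ((h⁻¹ : Rˣ) : R) * ((((g⁻¹ : Rˣ) : R)) * s * (g : R)) * (h : R) := by
  obtain ⟨-, α, -, hα⟩ := hq
  have e : (g : R) * (h : R) = ((α g : kˣ) : k) • ((h : R) * (g : R)) := hα g hgl
  set c : kˣ := α g with hc
  have hu : ((h * g : Rˣ) : R) = (h : R) * (g : R) := rfl
  have hv : ((g * h : Rˣ) : R) = (c : k) • ((h * g : Rˣ) : R) := by
    rw [Units.val_mul, Units.val_mul, e]
  have hvinv : (((g * h)⁻¹ : Rˣ) : R) = ((c⁻¹ : kˣ) : k) • (((h * g)⁻¹ : Rˣ) : R) := by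
    have : ((g * h : Rˣ) : R) * (((c⁻¹ : kˣ) : k) • (((h * g)⁻¹ : Rˣ) : R)) = 1 := by
      rw [hv, smul_mul_assoc, mul_smul_comm, smul_smul]
      simp [mul_assoc]
    exact Units.inv_eq_of_mul_eq_one_right this
  have lhs : ((g⁻¹ : Rˣ) : R) * ((((h⁻¹ : Rˣ) : R)) * s * (h : R)) * (g : R)
      = (((h * g)⁻¹ : Rˣ) : R) * s * ((h * g : Rˣ) : R) := by
    rw [mul_inv_rev, Units.val_mul, Units.val_mul]
    noncomm_ring
  have rhs : ((h⁻¹ : Rˣ) : R) * ((((g⁻¹ : Rˣ) : R)) * s * (g : R)) * (h : R)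
      = (((g * h)⁻¹ : Rˣ) : R) * s * ((g * h : Rˣ) : R) := by
    rw [mul_inv_rev, Units.val_mul, Units.val_mul]
    noncomm_ring
  rw [lhs, rhs, hvinv, hv, smul_mul_assoc, smul_mul_assoc, mul_smul_comm, smul_smul]
  simp

end S16d
noncomputable section S16e

open TensorProduct MulOpposite LinearMap

variable {k : Type u} [Field k] {R : Type v} [Ring R] [Algebra k R]

lemma Pm_eq (H : HopfGaloisStr k R) (τ ω : R ≃ₐ[k] R) (g h : Rˣ)
    (hcomm : ∀ r, τ (ω r) = ω (τ r))
    (h2τ : ∀ r, H.μ (τ r) = TensorProduct.map τ.toLinearMap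
      (TensorProduct.map (opMapL k τ.toLinearMap) τ.toLinearMap) (H.μ r))
    (hgid : ∀ r,
      TensorProduct.map (conjL k R g) (LinearMap.rTensor R (conjOpL k R g)) (H.μ r)
        = TensorProduct.map τ.toLinearMap (LinearMap.rTensor R (opMapL k τ.toLinearMap)) (H.μ r))
    (h2ω : ∀ r, H.μ (ω r) = TensorProduct.map ω.toLinearMap
      (TensorProduct.map (opMapL k ω.toLinearMap) ω.toLinearMap) (H.μ r))
    (hhid : ∀ r,
      TensorProduct.map (conjL k R h) (LinearMap.rTensor R (conjOpL k R h)) (H.μ r)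
        = TensorProduct.map ω.toLinearMap (LinearMap.rTensor R (opMapL k ω.toLinearMap)) (H.μ r))
    (hqch : H.IsQuasiCentral h) (hgl : H.IsGroupLike g)
    (lam : R →ₗ[k] k) (hlam : lam 1 = 1)
    {z : Rᵐᵒᵖ ⊗[k] R} (hz : z ∈ HRsub H) :
    Pm τ ω g h z = Pm ω τ h g z := by
  have hz' : PhiMap H z = (1 : R) ⊗ₜ[k] z := hz
  have hQ : Qm (conjL k R g⁻¹ ∘ₗ conjL k R h⁻¹ ∘ₗ ω.toLinearMap ∘ₗ τ.toLinearMap)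
      = Qm (conjL k R h⁻¹ ∘ₗ conjL k R g⁻¹ ∘ₗ τ.toLinearMap ∘ₗ ω.toLinearMap) := by
    congr 1
    ext r
    simp only [LinearMap.comp_apply, AlgEquiv.toLinearMap_apply, conjL_apply]
    rw [hcomm r]
    simpa using qc_swap H hqch hgl (ω (τ r))
  have A := LQ H τ ω g h h2τ hgid h2ω hhid z
  have A' := LQ H ω τ h g h2ω hhid h2τ hgid z
  rw [hz'] at A A'
  rw [hQ] at A
  simp only [LinearMap.lTensor_tmul] at A A'
  have eA : (1 : R) ⊗ₜ[k] (Pm τ ω g h z) = (1 : R) ⊗ₜ[k] (Pm ω τ h g z) :=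
    A.trans A'.symm
  have := congrArg (fun t => (TensorProduct.lid k R)
    (TensorProduct.map lam LinearMap.id t)) eA
  simpa [hlam] using this

end S16e

/-- **Corollary expli-tau.** If `(τ,ω,g,h,c,ξ)` satisfies the
conditions of Theorem mainmain for the Hopf-Galois algebra `(R,μ)`, then there
are convolution-commuting characters `α, β` of `H̲(R)` such that
`τ(r) = α(r_(2)⊗r_(3)) g·r_(1)`, `ω(r) = β(r_(2)⊗r_(3)) h·r_(1)`, and on
`H̲(R)` one has `α(u_(1)) u_(2) = (g⁻¹⊗g)·u_(1) α(u_(2))` and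
`β(u_(1)) u_(2) = (h⁻¹⊗h)·u_(1) β(u_(2))`. -/
theorem stmt16 {k : Type u} [Field k] {R : Type v} [Ring R] [Algebra k R]
    [Nontrivial R] (H : HopfGaloisStr k R)
    (τ ω : R ≃ₐ[k] R) (g h : Rˣ) (c : R) (ξ : kˣ)
    (hyp : MainMainHyp H τ ω g h c ξ) :
    ∃ a b : Rᵐᵒᵖ ⊗[k] R →ₗ[k] k,
      -- `α` and `β` are characters of `H̲(R)`
      a (1 : Rᵐᵒᵖ ⊗[k] R) = 1 ∧ b (1 : Rᵐᵒᵖ ⊗[k] R) = 1 ∧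
      (∀ z w : Rᵐᵒᵖ ⊗[k] R, z ∈ HRsub H → w ∈ HRsub H →
        a (z * w) = a z * a w ∧ b (z * w) = b z * b w) ∧
      -- `α` and `β` convolution-commute on `H̲(R)`
      (∀ z ∈ HRsub H,
        LinearMap.mul' k k (TensorProduct.map a b (deltaMap H z))
          = LinearMap.mul' k k (TensorProduct.map b a (deltaMap H z))) ∧
      -- `τ(r) = α(r_(2) ⊗ r_(3)) g·r_(1)` and `ω(r) = β(r_(2) ⊗ r_(3)) h·r_(1)`
      (∀ r : R, τ r =
        (TensorProduct.rid k R) (TensorProduct.map (conjL k R g) a (H.μ r))) ∧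
      (∀ r : R, ω r =
        (TensorProduct.rid k R) (TensorProduct.map (conjL k R h) b (H.μ r))) ∧
      -- `α(u_(1)) u_(2) = (g⁻¹⊗g)·u_(1) α(u_(2))` for `u ∈ H̲(R)`
      (∀ z ∈ HRsub H,
        (TensorProduct.lid k (Rᵐᵒᵖ ⊗[k] R))
            (TensorProduct.map a LinearMap.id (deltaMap H z))
          = (TensorProduct.rid k (Rᵐᵒᵖ ⊗[k] R))
              (TensorProduct.map
                (LinearMap.mulLeft k (phiEl g) ∘ₗ
                  LinearMap.mulRight k
                    ((MulOpposite.op ((g : Rˣ) : R)) ⊗ₜ[k] (((g⁻¹ : Rˣ)) : R)))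
                a (deltaMap H z))) ∧
      -- `β(u_(1)) u_(2) = (h⁻¹⊗h)·u_(1) β(u_(2))` for `u ∈ H̲(R)`
      (∀ z ∈ HRsub H,
        (TensorProduct.lid k (Rᵐᵒᵖ ⊗[k] R))
            (TensorProduct.map b LinearMap.id (deltaMap H z))
          = (TensorProduct.rid k (Rᵐᵒᵖ ⊗[k] R))
              (TensorProduct.map
                (LinearMap.mulLeft k (phiEl h) ∘ₗ
                  LinearMap.mulRight k
                    ((MulOpposite.op ((h : Rˣ) : R)) ⊗ₜ[k] (((h⁻¹ : Rˣ)) : R)))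
                b (deltaMap H z))) := by
  obtain ⟨lam, hlam⟩ := exists_lam (k := k) (R := R)
  refine ⟨lam ∘ₗ Bm τ g, lam ∘ₗ Bm ω h, ?_, ?_, ?_, ?_, ?_, ?_, ?_, ?_⟩
  · simp [Algebra.TensorProduct.one_def, hlam]
  · simp [Algebra.TensorProduct.one_def, hlam]
  · intro z w hz hw
    exact ⟨by simpa using L7 H τ g hyp.idτ2 hyp.idg lam hlam hz w,
      by simpa using L7 H ω h hyp.idω2 hyp.idh lam hlam hz w⟩
  · intro z hz
    have e1 : TensorProduct.map (lam ∘ₗ Bm τ g) (lam ∘ₗ Bm ω h) (deltaMap H z)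
        = TensorProduct.map lam lam
            (TensorProduct.map (Bm τ g) (Bm ω h) (deltaMap H z)) := by
      rw [mapmap]
    have e2 : TensorProduct.map (lam ∘ₗ Bm ω h) (lam ∘ₗ Bm τ g) (deltaMap H z)
        = TensorProduct.map lam lam
            (TensorProduct.map (Bm ω h) (Bm τ g) (deltaMap H z)) := by
      rw [mapmap]
    rw [e1, e2, L11 H τ ω g h hyp.idτ1 hyp.idω2 hyp.idh z,
      L11 H ω τ h g hyp.idω1 hyp.idτ2 hyp.idg z,
      Pm_eq H τ ω g h hyp.comm hyp.idτ2 hyp.idg hyp.idω2 hyp.idh hyp.qch hyp.qcg.1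
        lam hlam hz]
  · exact fun r => L8 H τ g hyp.idτ2 hyp.idg lam hlam r
  · exact fun r => L8 H ω h hyp.idω2 hyp.idh lam hlam r
  · intro z hz
    have hz' : PhiMap H z = (1 : R) ⊗ₜ[k] z := hz
    have eL : TensorProduct.map (lam ∘ₗ Bm τ g) LinearMap.id (deltaMap H z)
        = TensorProduct.map lam LinearMap.id
            (TensorProduct.map (Bm τ g) LinearMap.id (deltaMap H z)) := by
      rw [mapmap, LinearMap.id_comp]
    rw [eL, L9 H τ g hyp.idτ1 hyp.idτ2 hyp.idg z, hz', conj2_eq]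
    have eR : TensorProduct.map
        (TensorProduct.map (conjOpL k R g) (conjL k R g)) (lam ∘ₗ Bm τ g) (deltaMap H z)
        = TensorProduct.map LinearMap.id lam
            (TensorProduct.map (TensorProduct.map (conjOpL k R g) (conjL k R g))
              (Bm τ g) (deltaMap H z)) := by
      rw [mapmap, LinearMap.id_comp]
    rw [eR, L10 H τ g hyp.idτ2 hyp.idg z]
    simp [hlam]
  · intro z hz
    have hz' : PhiMap H z = (1 : R) ⊗ₜ[k] z := hz
    have eL : TensorProduct.map (lam ∘ₗ Bm ω h) LinearMap.id (deltaMap H z)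
        = TensorProduct.map lam LinearMap.id
            (TensorProduct.map (Bm ω h) LinearMap.id (deltaMap H z)) := by
      rw [mapmap, LinearMap.id_comp]
    rw [eL, L9 H ω h hyp.idω1 hyp.idω2 hyp.idh z, hz', conj2_eq]
    have eR : TensorProduct.map
        (TensorProduct.map (conjOpL k R h) (conjL k R h)) (lam ∘ₗ Bm ω h) (deltaMap H z)
        = TensorProduct.map LinearMap.id lam
            (TensorProduct.map (TensorProduct.map (conjOpL k R h) (conjL k R h))
              (Bm ω h) (deltaMap H z)) := by
      rw [mapmap, LinearMap.id_comp]
    rw [eR, L10 H ω h hyp.idω2 hyp.idh z]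
    simp [hlam]
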